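/- Failure of 3-amalgamation in Hilbert spaces: in ℝ³ with the standard inner product, let a = (1,0,0), a' = (0,1,0), b = (1,0,1), c = (0,1,1), d = (1/2, 1/2, 2), and suppose V is a real vector space with a bilinear form extending the inner product via maps g, h from two copies of ℝ³ and i from a third copy, commuting appropriately and with a* := g(a) = h(a'). Then for v = 2(b + c − d) one has [a* − v, a* − v] = −3; in particular the form on V is not positive definite and V is not an inner product space. -/

import Mathlib

/-!
The vector `a* = g a = h a'` has its pairings with `b`, `c`, `d` dictated by the copies
through which it meets them: `[a*, b] = [a, b] = 1` and `[a*, d] = [a, d] = 1/2` in the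
copy `g`, `[a*, c] = [a', c] = 1` in the copy `h`. Inside the copy `i`, however,
`v = 2(b + c - d) = (1, 1, 0)` has `[v, v] = 2`, while `[a*, v] = 2(1 + 1 - 1/2) = 3`.
This violates Cauchy–Schwarz (`9 > [a*, a*][v, v] = 2`), and indeed
`[a* - v, a* - v] = 1 - 3 - 3 + 2 = -3`.
-/

theorem LinearMap.apply_sub_sub {R M : Type*} [CommRing R] [AddCommGroup M] [Module R M]
    (B : M →ₗ[R] M →ₗ[R] R) (x y : M) :
    B (x - y) (x - y) = B x x - B x y - B y x + B y y := by
  simp only [map_sub, LinearMap.sub_apply]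
  ring

theorem LinearMap.not_forall_pos_of_apply_self_neg {R M : Type*} [CommSemiring R] [Preorder R]
    [AddCommMonoid M] [Module R M] (B : M →ₗ[R] M →ₗ[R] R) {w : M} (hw : B w w < 0) :
    ¬ ∀ x, x ≠ 0 → 0 < B x x := by
  intro hpos
  by_cases hw0 : w = 0
  · simp [hw0] at hw
  · exact lt_asymm hw (hpos w hw0)

theorem hilbert_three_amalgamation_fails
    {V : Type*} [AddCommGroup V] [Module ℝ V] (B : V →ₗ[ℝ] V →ₗ[ℝ] ℝ)
    (g h i : (Fin 3 → ℝ) →ₗ[ℝ] V)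
    (hg : ∀ x y : Fin 3 → ℝ, B (g x) (g y) = x 0 * y 0 + x 1 * y 1 + x 2 * y 2)
    (hh : ∀ x y : Fin 3 → ℝ, B (h x) (h y) = x 0 * y 0 + x 1 * y 1 + x 2 * y 2)
    (hi : ∀ x y : Fin 3 → ℝ, B (i x) (i y) = x 0 * y 0 + x 1 * y 1 + x 2 * y 2)
    (hgb : g ![1, 0, 1] = i ![1, 0, 1])
    (hgd : g ![1/2, 1/2, 2] = i ![1/2, 1/2, 2])
    (hhc : h ![0, 1, 1] = i ![0, 1, 1])
    (hga : g ![1, 0, 0] = h ![0, 1, 0]) :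
    (B (g ![1, 0, 0] - (2 : ℝ) • (i ![1, 0, 1] + i ![0, 1, 1] - i ![1/2, 1/2, 2]))
       (g ![1, 0, 0] - (2 : ℝ) • (i ![1, 0, 1] + i ![0, 1, 1] - i ![1/2, 1/2, 2])) = -3) ∧
    ¬ (∀ x : V, x ≠ 0 → 0 < B x x) := by
  set a := g ![1, 0, 0] with ha
  set v := (2 : ℝ) • (i ![1, 0, 1] + i ![0, 1, 1] - i ![1/2, 1/2, 2]) with hv
  have hab : B a (i ![1, 0, 1]) = 1 ∧ B (i ![1, 0, 1]) a = 1 := by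
    norm_num [ha, ← hgb, hg, Matrix.cons_val_two]
  have hac : B a (i ![0, 1, 1]) = 1 ∧ B (i ![0, 1, 1]) a = 1 := by
    norm_num [hga, ← hhc, hh, Matrix.cons_val_two]
  have had : B a (i ![1/2, 1/2, 2]) = 1/2 ∧ B (i ![1/2, 1/2, 2]) a = 1/2 := by
    norm_num [ha, ← hgd, hg, Matrix.cons_val_two]
  have haa : B a a = 1 := by norm_num [ha, hg, Matrix.cons_val_two]
  have hav : B a v = 3 ∧ B v a = 3 := by
    simp only [hv, map_smul, map_add, map_sub, LinearMap.smul_apply, LinearMap.add_apply,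
      LinearMap.sub_apply, smul_eq_mul, hab, hac, had]
    norm_num
  have hvv : B v v = 2 := by
    have hv_eq : v = i ![1, 1, 0] := by
      rw [hv, ← map_add, ← map_sub, ← map_smul]
      congr 1
      ext j; fin_cases j <;> norm_num
    norm_num [hv_eq, hi, Matrix.cons_val_two]
  have hneg : B (a - v) (a - v) = -3 := by
    rw [LinearMap.apply_sub_sub, haa, hav.1, hav.2, hvv]
    norm_num
  exact ⟨hneg, B.not_forall_pos_of_apply_self_neg (by rw [hneg]; norm_num)⟩
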